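/- arXiv:1902.06695 — 2 statements merged into one kernel-verified Lean document; each statement's English description precedes it below -/
import Mathlib

section
/- For every integer m ≥ 2, ζ(m) = 1 + ∑_{r ∈ S} 1/(r^m − 1), where S is the set of integers r ≥ 2 that are not perfect powers, the series converging absolutely. -/
/-- The set of integers `r ≥ 2` that are not perfect powers, i.e. not of the form
`a ^ k` with `a ≥ 2` and `k ≥ 2`. -/
def nonPerfectPowers : Set ℕ :=
  {r | 2 ≤ r ∧ ¬ ∃ a k : ℕ, 2 ≤ a ∧ 2 ≤ k ∧ a ^ k = r}

open Nat Finset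

/-- gcd of exponents -/
noncomputable def expGcd (n : ℕ) : ℕ := n.factorization.support.gcd n.factorization

lemma expGcd_dvd (n p : ℕ) : expGcd n ∣ n.factorization p := by
  by_cases hp : p ∈ n.factorization.support
  · exact Finset.gcd_dvd hp
  · simp [Finsupp.notMem_support_iff.mp hp]

lemma eq_pow_of_dvd_factorization {n k : ℕ} (hn : n ≠ 0) (hk : k ≠ 0)
    (h : ∀ p, k ∣ n.factorization p) : ∃ a, a ^ k = n := by
  refine ⟨∏ p ∈ n.factorization.support, p ^ (n.factorization p / k), ?_⟩
  rw [← Finset.prod_pow]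
  have : ∀ p ∈ n.factorization.support,
      (p ^ (n.factorization p / k)) ^ k = p ^ n.factorization p := by
    intro p _
    rw [← pow_mul, Nat.div_mul_cancel (h p)]
  rw [Finset.prod_congr rfl this]
  exact Nat.factorization_prod_pow_eq_self hn

lemma expGcd_eq_one {r : ℕ} (hr : 2 ≤ r)
    (h : ¬ ∃ a k : ℕ, 2 ≤ a ∧ 2 ≤ k ∧ a ^ k = r) : expGcd r = 1 := by
  have hr0 : r ≠ 0 := by omega
  have hne : r.factorization.support.Nonempty := by
    rw [Nat.support_factorization]
    exact (Nat.nonempty_primeFactors).2 (by omega)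
  obtain ⟨p, hp⟩ := hne
  have hg0 : expGcd r ≠ 0 := by
    intro h0
    have := expGcd_dvd r p
    rw [h0, Nat.zero_dvd] at this
    exact (Finsupp.mem_support_iff.mp hp) this
  by_contra hg1
  have hg2 : 2 ≤ expGcd r := by omega
  obtain ⟨a, ha⟩ := eq_pow_of_dvd_factorization hr0 hg0 (expGcd_dvd r)
  have ha2 : 2 ≤ a := by
    rcases Nat.lt_or_ge a 2 with h2 | h2
    · interval_cases a <;> simp_all <;> omega
    · exact h2
  exact h ⟨a, expGcd r, ha2, hg2, ha⟩

lemma expGcd_pow {r j : ℕ} (hr : 2 ≤ r) (hj : j ≠ 0) :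
    expGcd (r ^ j) = j * expGcd r := by
  have hr0 : r ≠ 0 := by omega
  unfold expGcd
  rw [Nat.factorization_pow]
  have hsupp : (j • r.factorization).support = r.factorization.support := by
    ext p
    simp [Finsupp.mem_support_iff, hj]
  rw [hsupp]
  have : (r.factorization.support.gcd fun p => (j • r.factorization) p)
      = r.factorization.support.gcd fun p => j * r.factorization p := by
    apply Finset.gcd_congr rfl
    intro p _
    simp
  rw [show ((j • r.factorization : ℕ →₀ ℕ) : ℕ → ℕ) = fun p => j * r.factorization p from by
    ext p; simp]
  rw [Finset.gcd_mul_left]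
  simp

/-- uniqueness of representation -/
lemma pow_inj {r s j k : ℕ} (hr : r ∈ nonPerfectPowers) (hs : s ∈ nonPerfectPowers)
    (h : r ^ (j + 1) = s ^ (k + 1)) : r = s ∧ j = k := by
  obtain ⟨hr2, hrnp⟩ := hr
  obtain ⟨hs2, hsnp⟩ := hs
  have hjk : j + 1 = k + 1 := by
    have h1 := expGcd_pow hr2 (Nat.succ_ne_zero j)
    have h2 := expGcd_pow hs2 (Nat.succ_ne_zero k)
    rw [h, h2, expGcd_eq_one hs2 hsnp] at h1
    rw [expGcd_eq_one hr2 hrnp] at h1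
    omega
  refine ⟨?_, by omega⟩
  have := h
  rw [hjk] at this
  exact Nat.pow_left_injective (by omega) this

/-- existence -/
lemma exists_rep (n : ℕ) (hn : 2 ≤ n) :
    ∃ r ∈ nonPerfectPowers, ∃ j : ℕ, r ^ (j + 1) = n := by
  induction n using Nat.strong_induction_on with
  | _ n ih =>
  by_cases h : n ∈ nonPerfectPowers
  · exact ⟨n, h, 0, by simp⟩
  · simp only [nonPerfectPowers, Set.mem_setOf_eq, not_and, not_not] at h
    obtain ⟨a, k, ha2, hk2, hak⟩ := h hn
    have halt : a < n := by
      calc a < a ^ 2 := by nlinarith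
      _ ≤ a ^ k := Nat.pow_le_pow_right (by omega) hk2
      _ = n := hak
    obtain ⟨r, hr, j, hj⟩ := ih a halt ha2
    refine ⟨r, hr, (j + 1) * k - 1, ?_⟩
    have : (j + 1) * k - 1 + 1 = (j + 1) * k := by
      have : 1 ≤ (j + 1) * k := Nat.one_le_iff_ne_zero.2 (by positivity)
      omega
    rw [this, pow_mul, hj, hak]

theorem riemannZeta_nat_eq_one_add_tsum
    (m : ℕ) (hm : 2 ≤ m) :
    Summable (fun r : nonPerfectPowers => ‖1 / (((r : ℕ) : ℂ) ^ m - 1)‖) ∧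
      riemannZeta m = 1 + ∑' r : nonPerfectPowers, 1 / (((r : ℕ) : ℂ) ^ m - 1) := by
  -- basic facts
  have hrm_ge : ∀ r : nonPerfectPowers, (4 : ℝ) ≤ ((r : ℕ) : ℝ) ^ m := by
    intro r
    have hr2 : (2 : ℕ) ≤ (r : ℕ) := r.2.1
    calc (4 : ℝ) = 2 ^ 2 := by norm_num
    _ ≤ ((r : ℕ) : ℝ) ^ 2 := by
        apply pow_le_pow_left₀ (by norm_num)
        exact_mod_cast hr2
    _ ≤ ((r : ℕ) : ℝ) ^ m := by
        apply pow_le_pow_right₀ (by exact_mod_cast hr2.trans' (by norm_num))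
        exact hm
  have hnorm_pow : ∀ r : nonPerfectPowers, ‖((r : ℕ) : ℂ) ^ m‖ = ((r : ℕ) : ℝ) ^ m := by
    intro r; rw [norm_pow, Complex.norm_natCast]
  -- summability of 2 / r^m over the subtype
  have hsum2 : Summable (fun r : nonPerfectPowers => 2 / (((r : ℕ) : ℝ) ^ m)) := by
    have h1 : Summable (fun n : ℕ => 2 * (1 / (n : ℝ) ^ m)) :=
      (Real.summable_one_div_nat_pow.2 hm).mul_left 2
    have := h1.subtype nonPerfectPowers
    apply this.congr
    intro r
    simp only [Function.comp_apply, one_div, inv_pow]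
    ring
  -- bound for 1/(r^m - 1)
  have hbound : ∀ r : nonPerfectPowers,
      ‖1 / (((r : ℕ) : ℂ) ^ m - 1)‖ ≤ 2 / (((r : ℕ) : ℝ) ^ m) := by
    intro r
    have h4 := hrm_ge r
    have hlow : ((r : ℕ) : ℝ) ^ m / 2 ≤ ‖((r : ℕ) : ℂ) ^ m - 1‖ := by
      have := norm_sub_norm_le (((r : ℕ) : ℂ) ^ m) 1
      rw [hnorm_pow r, norm_one] at this
      linarith
    rw [norm_div, norm_one]
    have hpos : (0:ℝ) < ((r : ℕ) : ℝ) ^ m / 2 := by linarith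
    have h2 : (0:ℝ) < ‖((r : ℕ) : ℂ) ^ m - 1‖ := lt_of_lt_of_le hpos hlow
    rw [div_le_div_iff₀ h2 (by linarith)]
    calc 1 * ((r : ℕ) : ℝ) ^ m = ((r : ℕ) : ℝ) ^ m := by ring
    _ ≤ 2 * ‖((r : ℕ) : ℂ) ^ m - 1‖ := by
        have := mul_le_mul_of_nonneg_left hlow (by norm_num : (0:ℝ) ≤ 2)
        linarith
  have hSummNorm : Summable (fun r : nonPerfectPowers => ‖1 / (((r : ℕ) : ℂ) ^ m - 1)‖) :=
    Summable.of_nonneg_of_le (fun r => norm_nonneg _) hbound hsum2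
  refine ⟨hSummNorm, ?_⟩
  -- the main identity
  set F : ℕ → ℂ := fun n => 1 / (n : ℂ) ^ m with hF
  set G : ℕ → ℂ := fun n => if 2 ≤ n then F n else 0 with hG
  have hFnorm : Summable (fun n : ℕ => ‖F n‖) := by
    apply (Real.summable_one_div_nat_pow.2 hm).congr
    intro n
    simp [hF, norm_div, Complex.norm_natCast]
  have hGnorm : Summable (fun n : ℕ => ‖G n‖) := by
    apply Summable.of_nonneg_of_le (fun n => norm_nonneg _) _ hFnorm
    intro n
    by_cases h : 2 ≤ n <;> simp [hG, h]
  have hFsum : Summable F := hFnorm.of_norm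
  have hGsum : Summable G := hGnorm.of_norm
  -- injection i
  set i : nonPerfectPowers × ℕ → ℕ := fun p => (p.1 : ℕ) ^ (p.2 + 1) with hi
  have hinj : Function.Injective i := by
    rintro ⟨r, j⟩ ⟨s, k⟩ h
    obtain ⟨h1, h2⟩ := pow_inj r.2 s.2 h
    exact Prod.ext (Subtype.ext h1) h2
  have hrange : ∀ n : ℕ, 2 ≤ n → n ∈ Set.range i := by
    intro n hn
    obtain ⟨r, hr, j, hj⟩ := exists_rep n hn
    exact ⟨(⟨r, hr⟩, j), hj⟩
  have hige : ∀ p : nonPerfectPowers × ℕ, 2 ≤ i p := by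
    rintro ⟨r, j⟩
    calc 2 = 2 ^ 1 := by norm_num
    _ ≤ (r : ℕ) ^ (j + 1) := Nat.pow_le_pow_left r.2.1 (j+1) |>.trans'
        (Nat.pow_le_pow_right (by norm_num) (by omega))
  -- tsum G = tsum over product
  have hstep1 : ∑' p : nonPerfectPowers × ℕ, F (i p) = ∑' n, G n := by
    rw [← hinj.tsum_eq]
    · apply tsum_congr
      intro p
      simp [hG, hige p]
    · intro n hn
      simp only [hG, Function.mem_support] at hn
      rcases Nat.lt_or_ge n 2 with h2 | h2
      · rw [if_neg (by omega)] at hn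
        exact absurd rfl hn
      · exact hrange n h2
  -- product summability
  have hprodnorm : Summable (fun p : nonPerfectPowers × ℕ => ‖F (i p)‖) := by
    have h2 := hGnorm.comp_injective hinj
    apply h2.congr
    intro p
    simp only [Function.comp_apply, hG, if_pos (hige p)]
  have hprodsum : Summable (fun p : nonPerfectPowers × ℕ => F (i p)) := hprodnorm.of_norm
  have hstep2 : ∑' p : nonPerfectPowers × ℕ, F (i p)
      = ∑' (r : nonPerfectPowers) (j : ℕ), F ((r : ℕ) ^ (j + 1)) := Summable.tsum_prod hprodsum
  -- inner geometric sum
  have hinner : ∀ r : nonPerfectPowers,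
      ∑' j : ℕ, F ((r : ℕ) ^ (j + 1)) = 1 / (((r : ℕ) : ℂ) ^ m - 1) := by
    intro r
    set y : ℂ := ((r : ℕ) : ℂ) ^ m with hy
    have hy4 : (4 : ℝ) ≤ ‖y‖ := by rw [hy, hnorm_pow r]; exact hrm_ge r
    have hy0 : y ≠ 0 := by
      intro h; rw [h, norm_zero] at hy4; linarith
    have hx : ‖y⁻¹‖ < 1 := by
      rw [norm_inv]
      rw [inv_lt_one_iff₀]
      right; linarith
    have hy1 : y - 1 ≠ 0 := by
      intro h
      have : y = 1 := by
        have := sub_eq_zero.mp h; exact this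
      rw [this, norm_one] at hy4; linarith
    have hFval : ∀ j : ℕ, F ((r : ℕ) ^ (j + 1)) = y⁻¹ * (y⁻¹) ^ j := by
      intro j
      simp only [hF, hy]
      push_cast
      rw [← pow_mul, mul_comm (j + 1) m, pow_mul, ← inv_pow, pow_succ, mul_comm, one_div]
      simp [mul_inv, inv_pow]
      ring
    rw [tsum_congr hFval, tsum_mul_left, tsum_geometric_of_norm_lt_one hx]
    have h1x : (1 : ℂ) - y⁻¹ ≠ 0 := by
      intro h
      have : y⁻¹ = 1 := by
        have := sub_eq_zero.mp h; exact this.symm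
      rw [this, norm_one] at hx; linarith
    field_simp
  -- zeta and splitting off n = 0, 1
  have hzeta : riemannZeta m = ∑' n : ℕ, F n := zeta_nat_eq_tsum_of_gt_one (by omega)
  have hsplit : ∑' n : ℕ, F n = 1 + ∑' n : ℕ, G n := by
    have hdecomp : ∀ n : ℕ, F n = (if n = 1 then (1 : ℂ) else 0) + G n := by
      intro n
      match n with
      | 0 => simp [hF, hG, zero_pow (by omega : m ≠ 0)]
      | 1 => simp [hF, hG]
      | (k + 2) => simp [hF, hG]
    rw [tsum_congr hdecomp,
      Summable.tsum_add ((hasSum_ite_eq 1 (1 : ℂ)).summable) hGsum, tsum_ite_eq]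
  rw [hzeta, hsplit, ← hstep1, hstep2]
  congr 1
  exact tsum_congr hinner
end

section
/- For every integer m ≥ 2, ζ(m) = 1 + ∑_{r ∈ S} ( cosh(m·log r/2)/(2·sinh(m·log r/2)) − 1/2 ), where S is the set of integers r ≥ 2 that are not perfect powers; here cosh, sinh and log are the real hyperbolic functions and logarithm, and the summand equals (1/2)·coth(m·log r/2) − 1/2. -/
theorem Nat.exists_eq_pow_of_pow_eq_pow_of_coprime {a b j k : ℕ} (hjk : j.Coprime k)
    (h : a ^ j = b ^ k) : ∃ c, a = c ^ k := by
  -- Over `ℚ` a root exists; taking numerators brings it back to `ℕ`.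
  obtain ⟨c, hc, -⟩ :=
    (pow_eq_pow_iff_of_coprime hjk).1 (by exact_mod_cast h : (a : ℚ) ^ j = (b : ℚ) ^ k)
  refine ⟨c.num.natAbs, ?_⟩
  simpa [Rat.num_pow, Int.natAbs_pow] using congrArg (Int.natAbs ∘ Rat.num) hc

namespace nonPerfectPowers

theorem eq_one_of_eq_pow {r c k : ℕ} (hr : r ∈ nonPerfectPowers) (hk : k ≠ 0)
    (h : r = c ^ k) : k = 1 := by
  by_contra hk1
  have hc : 2 ≤ c := by
    by_contra! hc
    have : c ^ k ≤ 1 := (Nat.pow_le_one_iff hk).2 (by omega)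
    have := hr.1
    omega
  exact hr.2 ⟨c, k, hc, by omega, h.symm⟩

theorem eq_of_pow_eq_pow {r s j k : ℕ} (hr : r ∈ nonPerfectPowers) (hs : s ∈ nonPerfectPowers)
    (hj : j ≠ 0) (hk : k ≠ 0) (h : r ^ j = s ^ k) : r = s ∧ j = k := by
  obtain ⟨g, j, k, hg, hjk, rfl, rfl⟩ :=
    Nat.exists_coprime' (Nat.gcd_pos_of_pos_left k (Nat.pos_of_ne_zero hj))
  have h' : r ^ j = s ^ k := Nat.pow_left_injective hg.ne' (by simpa only [pow_mul] using h)
  obtain ⟨c, hc⟩ := Nat.exists_eq_pow_of_pow_eq_pow_of_coprime hjk h'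
  obtain ⟨d, hd⟩ := Nat.exists_eq_pow_of_pow_eq_pow_of_coprime hjk.symm h'.symm
  obtain rfl := eq_one_of_eq_pow hr (by simp_all) hc
  obtain rfl := eq_one_of_eq_pow hs (by simp_all) hd
  simpa using h'

theorem exists_pow_succ_eq {n : ℕ} (hn : 2 ≤ n) :
    ∃ r ∈ nonPerfectPowers, ∃ j, r ^ (j + 1) = n := by
  induction n using Nat.strong_induction_on with
  | _ n ih =>
    by_cases hS : n ∈ nonPerfectPowers
    · exact ⟨n, hS, 0, pow_one n⟩
    obtain ⟨a, k, ha, hk, rfl⟩ : ∃ a k : ℕ, 2 ≤ a ∧ 2 ≤ k ∧ a ^ k = n := by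
      simpa [nonPerfectPowers, hn] using hS
    obtain ⟨r, hr, j, rfl⟩ := ih a (lt_self_pow₀ (by omega) (by omega)) ha
    refine ⟨r, hr, (j + 1) * k - 1, ?_⟩
    rw [← pow_mul, Nat.sub_add_cancel (Nat.one_le_iff_ne_zero.2 (by positivity))]

noncomputable def powEquiv : nonPerfectPowers × ℕ ≃ {n : ℕ // 2 ≤ n} :=
  Equiv.ofBijective
    (fun p => ⟨p.1 ^ (p.2 + 1), p.1.2.1.trans (Nat.le_self_pow p.2.succ_ne_zero _)⟩)
    ⟨fun ⟨⟨r, hr⟩, j⟩ ⟨⟨s, hs⟩, k⟩ h => by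
      obtain ⟨rfl, hjk⟩ :=
        eq_of_pow_eq_pow hr hs j.succ_ne_zero k.succ_ne_zero (congrArg Subtype.val h)
      simp_all,
    fun ⟨n, hn⟩ => by
      obtain ⟨r, hr, j, rfl⟩ := exists_pow_succ_eq hn
      exact ⟨(⟨r, hr⟩, j), rfl⟩⟩

end nonPerfectPowers

theorem hasSum_iff_hasSum_subtype_le {α : Type*} [AddCommGroup α] [TopologicalSpace α]
    [IsTopologicalAddGroup α] {f : ℕ → α} {a : α} (k : ℕ) :
    HasSum f a ↔ HasSum (fun n : {n // k ≤ n} => f n) (a - ∑ i ∈ Finset.range k, f i) :=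
  (Finset.range k).hasSum_iff_compl.trans
    (Equiv.subtypeEquivRight (p := (k ≤ ·)) fun n => by simp).hasSum_iff.symm

theorem hasSum_inv_pow_succ {x : ℝ} (hx : 1 < x) :
    HasSum (fun j : ℕ => (x ^ (j + 1))⁻¹) (x - 1)⁻¹ := by
  have h := (hasSum_geometric_of_lt_one (inv_nonneg.2 (by linarith))
    (inv_lt_one_of_one_lt₀ hx)).mul_left x⁻¹
  rw [show (x - 1)⁻¹ = x⁻¹ * (1 - x⁻¹)⁻¹ by field_simp]
  simpa only [pow_succ', mul_inv, inv_pow] using h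

theorem Real.cosh_div_two_mul_sinh_sub_half {x : ℝ} (hx : x ≠ 0) :
    cosh x / (2 * sinh x) - 1 / 2 = (exp (2 * x) - 1)⁻¹ := by
  have he : exp x ^ 2 - 1 ≠ 0 := by
    rw [← exp_nat_mul, sub_ne_zero, Ne, ← exp_zero, exp_eq_exp]
    simpa using hx
  have hs : exp x - (exp x)⁻¹ ≠ 0 := by
    contrapose! he
    field_simp at he
    linear_combination he
  rw [cosh_eq, sinh_eq, exp_neg, show (2 : ℝ) * x = (2 : ℕ) * x by norm_num, exp_nat_mul]
  field_simp
  ring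

theorem Real.cosh_div_two_mul_sinh_sub_half_of_mul_log {r : ℝ} (hr : 1 < r) {m : ℕ}
    (hm : m ≠ 0) :
    cosh (m * log r / 2) / (2 * sinh (m * log r / 2)) - 1 / 2 = (r ^ m - 1)⁻¹ := by
  have hx : m * log r / 2 ≠ 0 :=
    div_ne_zero (mul_ne_zero (Nat.cast_ne_zero.2 hm) (log_pos hr).ne') two_ne_zero
  rw [cosh_div_two_mul_sinh_sub_half hx, mul_div_cancel₀ _ two_ne_zero, exp_nat_mul,
    exp_log (zero_lt_one.trans hr)]

theorem riemannZeta_nat_eq_one_add_tsum_coth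
    (m : ℕ) (hm : 2 ≤ m) :
    riemannZeta m = 1 + ↑(∑' r : nonPerfectPowers,
      (Real.cosh (m * Real.log (r : ℕ) / 2) /
        (2 * Real.sinh (m * Real.log (r : ℕ) / 2)) - 1 / 2)) := by
  set f : ℕ → ℝ := fun n => ((n : ℝ) ^ m)⁻¹
  have htail : HasSum (fun n : {n : ℕ // 2 ≤ n} => f n) (∑' n, f n - 1) := by
    have h01 : ∑ i ∈ Finset.range 2, f i = 1 := by
      simp [f, Finset.sum_range_succ]
      omega
    rw [← h01]
    exact (hasSum_iff_hasSum_subtype_le 2).1 (Real.summable_nat_pow_inv.2 hm).hasSum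
  have hpow : HasSum (fun p : nonPerfectPowers × ℕ => f (p.1 ^ (p.2 + 1))) (∑' n, f n - 1) :=
    nonPerfectPowers.powEquiv.hasSum_iff.2 htail
  have hgeom (r : nonPerfectPowers) :
      HasSum (fun j => f (r ^ (j + 1))) (((r : ℝ) ^ m - 1)⁻¹) := by
    have hr : (1 : ℝ) < r := by exact_mod_cast r.2.1
    convert hasSum_inv_pow_succ (one_lt_pow₀ (n := m) hr (by omega)) using 2 with j
    simp only [f, Nat.cast_pow, ← pow_mul, mul_comm]
  have hcoth (r : nonPerfectPowers) :
      Real.cosh (m * Real.log (r : ℕ) / 2) / (2 * Real.sinh (m * Real.log (r : ℕ) / 2)) - 1 / 2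
        = ((r : ℝ) ^ m - 1)⁻¹ :=
    Real.cosh_div_two_mul_sinh_sub_half_of_mul_log (by exact_mod_cast r.2.1) (by omega)
  rw [tsum_congr hcoth, (hpow.prod_fiberwise hgeom).tsum_eq, zeta_nat_eq_tsum_of_gt_one hm]
  push_cast
  simp [f]
end
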